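/- arXiv:math/0602661 — 4 statements merged into one kernel-verified Lean document; each statement's English description precedes it below -/
import Mathlib

section
/- For positive constants h₀ and H, the function h(x) = h₀ · sech²(√(3h₀/(4H³)) · x) satisfies the ODE (dh/dx)² + (3/H³) · h² · (h - h₀) = 0 for all x. -/
open Real

/-- Rayleigh's solitary-wave profile `h(x) = h₀ sech²(√(3h₀/(4H³)) x)` satisfies
`(dh/dx)² + (3/H³) h² (h - h₀) = 0`. -/
theorem rayleigh_solitary_profile (h₀ H : ℝ) (hh₀ : 0 < h₀) (hH : 0 < H)
    (h : ℝ → ℝ)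
    (hdef : ∀ x, h x = h₀ * (1 / Real.cosh (Real.sqrt (3*h₀/(4*H^3)) * x))^2) :
    ∀ x, (deriv h x)^2 + (3/H^3) * (h x)^2 * (h x - h₀) = 0 := by
  intro x
  set a : ℝ := Real.sqrt (3*h₀/(4*H^3)) with ha
  have hfun : h = fun x => h₀ * ((Real.cosh (a*x))⁻¹)^2 := by
    funext y; rw [hdef y]; simp [one_div]
  have hcne : ∀ y : ℝ, Real.cosh (a*y) ≠ 0 := fun y => (Real.cosh_pos (a*y)).ne'
  have hc : HasDerivAt (fun y : ℝ => Real.cosh (a*y)) (a * Real.sinh (a*x)) x := by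
    have := (Real.hasDerivAt_cosh (a*x)).comp x ((hasDerivAt_id x).const_mul a)
    simpa [Function.comp_def, mul_comm] using this
  have hinv := hc.inv (hcne x)
  have hpow := hinv.pow 2
  have hD := hpow.const_mul h₀
  have hderiv : deriv h x = h₀ * (2 * ((Real.cosh (a*x))⁻¹)^1 *
      (-(a * Real.sinh (a*x)) / Real.cosh (a*x) ^ 2)) := by
    rw [hfun]; exact hD.deriv
  have ha2 : a^2 = 3*h₀/(4*H^3) := Real.sq_sqrt (by positivity)
  have hsinh : Real.sinh (a*x) ^ 2 = Real.cosh (a*x) ^ 2 - 1 := by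
    have := Real.cosh_sq (a*x); linarith
  rw [hderiv, hdef x]
  have hc0 := hcne x
  have hH0 : H ≠ 0 := hH.ne'
  have key : (a * Real.sinh (a*x))^2 * (4*H^3) =
      3*h₀*(Real.cosh (a*x)^2 - 1) := by
    rw [mul_pow, ha2, hsinh]; field_simp
  field_simp
  linear_combination h₀^2 * key
end

section
/- For constants g, H, h₁ > 0, the traveling wave h(x,t) = h₁ · sech²(√(3h₁/(4H³)) · (x - ωt)) with ω = √(gH) + (1/2)√(g/H)·h₁ satisfies the KdV-type equation ∂h/∂t + (3/2)√(g/H) · ∂/∂x(2Hh/3 + h²/2 + (H³/9) ∂²h/∂x²) = 0. -/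
open Real

noncomputable def F0 (a u : ℝ) : ℝ := a * (1 / Real.cosh u)^2
noncomputable def F1 (a u : ℝ) : ℝ := -2*a*Real.sinh u/(Real.cosh u)^3
noncomputable def F2 (a u : ℝ) : ℝ := -2*a/(Real.cosh u)^2 + 6*a*(Real.sinh u)^2/(Real.cosh u)^4
noncomputable def F3 (a u : ℝ) : ℝ := 16*a*Real.sinh u/(Real.cosh u)^3 - 24*a*(Real.sinh u)^3/(Real.cosh u)^5

lemma hasDerivAt_F0 (a u : ℝ) : HasDerivAt (F0 a) (F1 a u) u := by
  have hc : Real.cosh u ≠ 0 := (Real.cosh_pos u).ne'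
  have h2 := ((Real.hasDerivAt_cosh u).inv hc)
  have h3 := (h2.pow 2).const_mul a
  have he : F0 a = fun y => a * ((Real.cosh y)⁻¹)^2 := by
    funext v; simp [F0, one_div]
  rw [he]
  refine h3.congr_deriv ?_
  unfold F1; simp only [Pi.inv_apply, Pi.pow_apply]; field_simp
  linear_combination (-(2*a*Real.sinh u)) * mul_inv_cancel₀ hc

lemma hasDerivAt_F1 (a u : ℝ) : HasDerivAt (F1 a) (F2 a u) u := by
  have hc : Real.cosh u ≠ 0 := (Real.cosh_pos u).ne'
  have hc3 : (Real.cosh u)^3 ≠ 0 := pow_ne_zero _ hc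
  have hn : HasDerivAt (fun u => -2*a*Real.sinh u) (-2*a*Real.cosh u) u :=
    (Real.hasDerivAt_sinh u).const_mul (-2*a)
  have hd : HasDerivAt (fun u => (Real.cosh u)^3) (3*(Real.cosh u)^2*Real.sinh u) u := by
    have := (Real.hasDerivAt_cosh u).pow 3
    exact this.congr_deriv (by push_cast; ring)
  have := hn.div hd hc3
  refine this.congr_deriv ?_
  unfold F2; field_simp; try ring

lemma hasDerivAt_F2 (a u : ℝ) : HasDerivAt (F2 a) (F3 a u) u := by
  have hc : Real.cosh u ≠ 0 := (Real.cosh_pos u).ne'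
  have hc2 : (Real.cosh u)^2 ≠ 0 := pow_ne_zero _ hc
  have hc4 : (Real.cosh u)^4 ≠ 0 := pow_ne_zero _ hc
  have h1 : HasDerivAt (fun u => -2*a/(Real.cosh u)^2)
      ((0*(Real.cosh u)^2 - (-2*a)*(2*(Real.cosh u)^1*Real.sinh u))/((Real.cosh u)^2)^2) u :=
    (hasDerivAt_const u (-2*a)).div ((Real.hasDerivAt_cosh u).pow 2) hc2
  have h2 : HasDerivAt (fun u => 6*a*(Real.sinh u)^2/(Real.cosh u)^4)
      ((6*a*(2*(Real.sinh u)^1*Real.cosh u)*(Real.cosh u)^4 -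
        6*a*(Real.sinh u)^2*(4*(Real.cosh u)^3*Real.sinh u))/((Real.cosh u)^4)^2) u := by
    exact (((Real.hasDerivAt_sinh u).pow 2).const_mul (6*a)).div ((Real.hasDerivAt_cosh u).pow 4) hc4
  have := h1.add h2
  refine this.congr_deriv ?_
  unfold F3; field_simp; try ring

lemma comp_linear (f : ℝ → ℝ) (d a c x : ℝ) (hf : HasDerivAt f d (a*(x-c))) :
    HasDerivAt (fun y => f (a*(y-c))) (d*a) x := by
  have h1 : HasDerivAt (fun y : ℝ => a*(y-c)) a x := by
    simpa using ((hasDerivAt_id x).sub_const c).const_mul a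
  exact hf.comp x h1

lemma comp_linear_t (f : ℝ → ℝ) (d k x ω t : ℝ) (hf : HasDerivAt f d (k*(x-ω*t))) :
    HasDerivAt (fun t' => f (k*(x-ω*t'))) (d*(-(k*ω))) t := by
  have h1 : HasDerivAt (fun t' : ℝ => k*(x-ω*t')) (-(k*ω)) t := by
    have := (((hasDerivAt_id t).const_mul ω).const_sub x).const_mul k
    simpa using this
  exact hf.comp t h1

lemma keyid (c H h₁ k s cc : ℝ) (hccne : cc ≠ 0) (hH : H ≠ 0)
    (hcc : cc^2 = 1+s^2) (hk2 : k^2 = 3*h₁/(4*H^3)) :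
    (-2*h₁*s/cc^3) * (-(k*(c*H + c*h₁/2)))
    + 3/2 * c * ((2/3)*H*((-2*h₁*s/cc^3)*k)
      + (1/2)*(2*(h₁*(1/cc)^2)^1*((-2*h₁*s/cc^3)*k))
      + (H^3/9)*((((16*h₁*s/cc^3-24*h₁*s^3/cc^5)*k)*k)*k)) = 0 := by
  have hk3 : k^2*(4*H^3) = 3*h₁ := by rw [hk2]; field_simp
  field_simp
  linear_combination (54*h₁^2*s*k*c) * hcc + (3/4*h₁*s*k*c*(16*cc^2-24*s^2)) * hk3

/-- Boussinesq's solitary traveling wave `h(x,t) = h₁ sech²(√(3h₁/(4H³)) (x - ωt))`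
with `ω = √(gH) + (1/2)√(g/H) h₁` solves the unidirectional long-wave (KdV-type)
equation `∂h/∂t + (3/2)√(g/H) ∂/∂x((2/3)Hh + (1/2)h² + (H³/9)∂²h/∂x²) = 0`. -/
theorem boussinesq_traveling_wave (g H h₁ : ℝ) (hg : 0 < g) (hH : 0 < H) (hh₁ : 0 < h₁)
    (ω : ℝ) (hω : ω = Real.sqrt (g*H) + (1/2) * Real.sqrt (g/H) * h₁)
    (h : ℝ → ℝ → ℝ)
    (hdef : ∀ x t, h x t = h₁ * (1 / Real.cosh (Real.sqrt (3*h₁/(4*H^3)) * (x - ω*t)))^2) :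
    ∀ x t,
      deriv (fun t' => h x t') t
        + (3/2) * Real.sqrt (g/H)
          * deriv (fun x' => (2/3)*H*(h x' t) + (1/2)*(h x' t)^2
              + (H^3/9) * iteratedDeriv 2 (fun x'' => h x'' t) x') x = 0 := by
  intro x t
  set k := Real.sqrt (3*h₁/(4*H^3)) with hk
  set c := Real.sqrt (g/H) with hc
  -- t-derivative
  have hfun_t : (fun t' => h x t') = fun t' => F0 h₁ (k*(x-ω*t')) := by
    funext t'; rw [hdef]; rfl
  have hdt : deriv (fun t' => h x t') t = F1 h₁ (k*(x-ω*t)) * (-(k*ω)) := by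
    rw [hfun_t]
    exact (comp_linear_t (F0 h₁) _ k x ω t (hasDerivAt_F0 h₁ _)).deriv
  -- first x-derivative
  have hfun_x : (fun x'' => h x'' t) = fun x'' => F0 h₁ (k*(x''-ω*t)) := by
    funext y; rw [hdef]; rfl
  have hdx : deriv (fun x'' => h x'' t) = fun x' => F1 h₁ (k*(x'-ω*t)) * k := by
    funext x'
    rw [hfun_x]
    exact (comp_linear (F0 h₁) _ k (ω*t) x' (hasDerivAt_F0 h₁ _)).deriv
  -- second x-derivative
  have hdxx : iteratedDeriv 2 (fun x'' => h x'' t)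
      = fun x' => F2 h₁ (k*(x'-ω*t)) * k * k := by
    rw [show (2:ℕ) = 1+1 from rfl, iteratedDeriv_succ, iteratedDeriv_one, hdx]
    funext x'
    exact ((comp_linear (F1 h₁) _ k (ω*t) x' (hasDerivAt_F1 h₁ _)).mul_const k).deriv
  -- the big spatial function
  have hbig : (fun x' => (2/3)*H*(h x' t) + (1/2)*(h x' t)^2
        + (H^3/9) * iteratedDeriv 2 (fun x'' => h x'' t) x')
      = fun x' => (2/3)*H*(F0 h₁ (k*(x'-ω*t))) + (1/2)*(F0 h₁ (k*(x'-ω*t)))^2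
        + (H^3/9)*(F2 h₁ (k*(x'-ω*t))*k*k) := by
    funext x'; rw [hdef, hdxx]; rfl
  have hD : HasDerivAt (fun x' => (2/3)*H*(F0 h₁ (k*(x'-ω*t))) + (1/2)*(F0 h₁ (k*(x'-ω*t)))^2
        + (H^3/9)*(F2 h₁ (k*(x'-ω*t))*k*k))
      ((2/3)*H*(F1 h₁ (k*(x-ω*t))*k)
        + (1/2)*(2*(F0 h₁ (k*(x-ω*t)))^1*(F1 h₁ (k*(x-ω*t))*k))
        + (H^3/9)*((F3 h₁ (k*(x-ω*t))*k)*k*k)) x := by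
    have h0 := comp_linear (F0 h₁) _ k (ω*t) x (hasDerivAt_F0 h₁ _)
    have h2 := comp_linear (F2 h₁) _ k (ω*t) x (hasDerivAt_F2 h₁ _)
    exact ((h0.const_mul ((2/3)*H)).add ((h0.pow 2).const_mul (1/2))).add
      (((h2.mul_const k).mul_const k).const_mul (H^3/9))
  rw [hdt, hbig, hD.deriv]
  -- algebraic facts
  have hcH : c*H = Real.sqrt (g*H) := by
    rw [hc, show g*H = (g/H)*H^2 by field_simp,
      Real.sqrt_mul (by positivity) (H^2), Real.sqrt_sq hH.le]
  have hωc : ω = c*H + c*h₁/2 := by rw [hω, ← hcH]; ring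
  have hk2 : k^2 = 3*h₁/(4*H^3) := Real.sq_sqrt (by positivity)
  set u := k*(x-ω*t)
  have hccne : Real.cosh u ≠ 0 := (Real.cosh_pos u).ne'
  have hcc : (Real.cosh u)^2 = 1 + (Real.sinh u)^2 := by
    rw [Real.cosh_sq']
  have := keyid c H h₁ k (Real.sinh u) (Real.cosh u) hccne hH.ne' hcc hk2
  unfold F0 F1 F3
  rw [hωc]
  linear_combination this
end

section
/- Boussinesq's 'moment de stabilité' M(t) = ∫_ℝ [ (∂u/∂x)² + 2u³ ] dx is conserved for smooth, rapidly decaying solutions of the KdV equation ∂u/∂t - 6u ∂u/∂x + ∂³u/∂x³ = 0. -/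
open Real Filter MeasureTheory

noncomputable section KdVAux

/-- partial derivative in the first (x) direction -/
def pdx (f : ℝ × ℝ → ℝ) (p : ℝ × ℝ) : ℝ := fderiv ℝ f p (1, 0)

/-- partial derivative in the second (t) direction -/
def pdt (f : ℝ × ℝ → ℝ) (p : ℝ × ℝ) : ℝ := fderiv ℝ f p (0, 1)

lemma contDiff_pd {f : ℝ × ℝ → ℝ} (hf : ContDiff ℝ (⊤ : ℕ∞) f) (w : ℝ × ℝ) :
    ContDiff ℝ (⊤ : ℕ∞) (fun p => fderiv ℝ f p w) :=
  (ContinuousLinearMap.apply ℝ ℝ w).contDiff.comp (hf.fderiv_right (by simp))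

lemma contDiff_pdx {f : ℝ × ℝ → ℝ} (hf : ContDiff ℝ (⊤ : ℕ∞) f) : ContDiff ℝ (⊤ : ℕ∞) (pdx f) :=
  contDiff_pd hf _

lemma contDiff_pdt {f : ℝ × ℝ → ℝ} (hf : ContDiff ℝ (⊤ : ℕ∞) f) : ContDiff ℝ (⊤ : ℕ∞) (pdt f) :=
  contDiff_pd hf _

lemma hasDerivAt_sec_x {f : ℝ × ℝ → ℝ} (hf : ContDiff ℝ (⊤ : ℕ∞) f) (x t : ℝ) :
    HasDerivAt (fun x' => f (x', t)) (pdx f (x, t)) x := by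
  have h1 : HasDerivAt (fun x' : ℝ => ((x', t) : ℝ × ℝ)) ((1 : ℝ), (0 : ℝ)) x :=
    (hasDerivAt_id x).prodMk (hasDerivAt_const x t)
  exact ((hf.differentiable (by simp) (x, t)).hasFDerivAt).comp_hasDerivAt x h1

lemma hasDerivAt_sec_t {f : ℝ × ℝ → ℝ} (hf : ContDiff ℝ (⊤ : ℕ∞) f) (x t : ℝ) :
    HasDerivAt (fun t' => f (x, t')) (pdt f (x, t)) t := by
  have h1 : HasDerivAt (fun t' : ℝ => ((x, t') : ℝ × ℝ)) ((0 : ℝ), (1 : ℝ)) t :=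
    (hasDerivAt_const t x).prodMk (hasDerivAt_id t)
  exact ((hf.differentiable (by simp) (x, t)).hasFDerivAt).comp_hasDerivAt t h1

lemma pd_comm {f : ℝ × ℝ → ℝ} (hf : ContDiff ℝ (⊤ : ℕ∞) f) (p : ℝ × ℝ) :
    pdx (pdt f) p = pdt (pdx f) p := by
  have hdf : ∀ y, HasFDerivAt f (fderiv ℝ f y) y := fun y =>
    (hf.differentiable (by simp) y).hasFDerivAt
  have h2 : HasFDerivAt (fderiv ℝ f) (fderiv ℝ (fderiv ℝ f) p) p :=
    ((hf.fderiv_right (m := 1) (by exact WithTop.coe_le_coe.mpr le_top)).differentiable one_ne_zero p).hasFDerivAt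
  have hsymm := second_derivative_symmetric hdf h2
  have key : ∀ w : ℝ × ℝ,
      HasFDerivAt (fun q => fderiv ℝ f q w)
        ((ContinuousLinearMap.apply ℝ ℝ w).comp (fderiv ℝ (fderiv ℝ f) p)) p :=
    fun w => ((ContinuousLinearMap.apply ℝ ℝ w).hasFDerivAt).comp p h2
  have e1 : pdx (pdt f) p = (fderiv ℝ (fderiv ℝ f) p (1, 0)) (0, 1) := by
    have h := (key (0, 1)).fderiv
    show fderiv ℝ (fun q => fderiv ℝ f q (0, 1)) p (1, 0) = _
    rw [h]; rfl
  have e2 : pdt (pdx f) p = (fderiv ℝ (fderiv ℝ f) p (0, 1)) (1, 0) := by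
    have h := (key (1, 0)).fderiv
    show fderiv ℝ (fun q => fderiv ℝ f q (1, 0)) p (0, 1) = _
    rw [h]; rfl
  rw [e1, e2, hsymm]

/-- iterated x-partials -/
def W (v : ℝ × ℝ → ℝ) (n : ℕ) : ℝ × ℝ → ℝ := pdx^[n] v

lemma W_succ (v : ℝ × ℝ → ℝ) (n : ℕ) : W v (n + 1) = pdx (W v n) := by
  simp [W, Function.iterate_succ_apply']

lemma W_contDiff {v : ℝ × ℝ → ℝ} (hv : ContDiff ℝ (⊤ : ℕ∞) v) (n : ℕ) :
    ContDiff ℝ (⊤ : ℕ∞) (W v n) := by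
  induction n with
  | zero => exact hv
  | succ n ih => rw [W_succ]; exact contDiff_pdx ih

lemma hasDerivAt_W_x {v : ℝ × ℝ → ℝ} (hv : ContDiff ℝ (⊤ : ℕ∞) v) (n : ℕ) (x t : ℝ) :
    HasDerivAt (fun x' => W v n (x', t)) (W v (n + 1) (x, t)) x := by
  rw [W_succ]
  exact hasDerivAt_sec_x (W_contDiff hv n) x t

lemma iterated_eq {v : ℝ × ℝ → ℝ} (hv : ContDiff ℝ (⊤ : ℕ∞) v) (n : ℕ) (t x : ℝ) :
    iteratedDeriv n (fun x' => v (x', t)) x = W v n (x, t) := by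
  induction n generalizing x with
  | zero => simp [W]
  | succ n ih =>
    rw [iteratedDeriv_succ,
      show iteratedDeriv n (fun x' => v (x', t)) = fun x' => W v n (x', t) from
        funext fun x' => ih x']
    exact (hasDerivAt_W_x hv n x t).deriv

lemma bdd_of_tendsto {f : ℝ → ℝ} (hc : Continuous f)
    (h1 : Tendsto f atTop (nhds 0)) (h2 : Tendsto f atBot (nhds 0)) :
    ∃ C, ∀ x, ‖f x‖ ≤ C := by
  have e1 : ∀ᶠ x in atTop, ‖f x‖ ≤ 1 := by
    have := (NormedAddCommGroup.tendsto_nhds_zero.mp h1) 1 one_pos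
    exact this.mono fun x hx => le_of_lt hx
  have e2 : ∀ᶠ x in atBot, ‖f x‖ ≤ 1 := by
    have := (NormedAddCommGroup.tendsto_nhds_zero.mp h2) 1 one_pos
    exact this.mono fun x hx => le_of_lt hx
  obtain ⟨A, hA⟩ := eventually_atTop.mp e1
  obtain ⟨B, hB⟩ := eventually_atBot.mp e2
  obtain ⟨C₀, hC₀⟩ := (isCompact_Icc (a := B) (b := A)).exists_bound_of_continuousOn
    hc.continuousOn
  refine ⟨max C₀ 1, fun x => ?_⟩
  rcases le_total x B with hx | hx
  · exact le_trans (hB x hx) (le_max_right _ _)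
  rcases le_total A x with hx' | hx'
  · exact le_trans (hA x hx') (le_max_right _ _)
  · exact le_trans (hC₀ x ⟨hx, hx'⟩) (le_max_left _ _)

end KdVAux

/-- Conservation of Boussinesq's "moment de stabilité"
`M(t) = ∫ [(∂u/∂x)² + 2u³] dx` for smooth, rapidly decaying solutions of the
KdV equation `∂u/∂t - 6u ∂u/∂x + ∂³u/∂x³ = 0`. -/
theorem kdv_moment_de_stabilite_conserved
    (u : ℝ → ℝ → ℝ)  -- u x t
    (hsm : ContDiff ℝ (⊤ : ℕ∞) (fun p : ℝ × ℝ => u p.1 p.2))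
    (hkdv : ∀ x t,
      deriv (fun t' => u x t') t
        - 6 * u x t * deriv (fun x' => u x' t) x
        + iteratedDeriv 3 (fun x' => u x' t) x = 0)
    (hint : ∀ t, ∀ n ≤ 5, Integrable (fun x => iteratedDeriv n (fun x' => u x' t) x))
    (hdecay : ∀ t, ∀ n ≤ 5,
      Tendsto (fun x => iteratedDeriv n (fun x' => u x' t) x) atTop (nhds 0) ∧
      Tendsto (fun x => iteratedDeriv n (fun x' => u x' t) x) atBot (nhds 0))
    -- differentiation under the integral sign is justified:
    (hdui : ∀ t, HasDerivAt
      (fun t' => ∫ x, (deriv (fun x' => u x' t') x)^2 + 2*(u x t')^3)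
      (∫ x, deriv (fun t' => (deriv (fun x' => u x' t') x)^2 + 2*(u x t')^3) t) t) :
    ∀ t, HasDerivAt
      (fun t' => ∫ x, (deriv (fun x' => u x' t') x)^2 + 2*(u x t')^3) 0 t := by
  intro t
  set v : ℝ × ℝ → ℝ := fun p => u p.1 p.2 with hvdef
  have hv : ContDiff ℝ (⊤ : ℕ∞) v := hsm
  -- basic facts
  have hWd : ∀ n x t', HasDerivAt (fun x' => W v n (x', t')) (W v (n + 1) (x, t')) x :=
    fun n x t' => hasDerivAt_W_x hv n x t'
  have hW0 : W v 0 = v := rfl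
  have hIE : ∀ n t' x, iteratedDeriv n (fun x' => u x' t') x = W v n (x, t') :=
    fun n t' x => iterated_eq hv n t' x
  have hderiv_sec : ∀ x t', deriv (fun x' => u x' t') x = W v 1 (x, t') := by
    intro x t'
    exact (hWd 0 x t').deriv
  -- KdV in terms of W
  have hK : ∀ x t', pdt v (x, t') = 6 * v (x, t') * W v 1 (x, t') - W v 3 (x, t') := by
    intro x t'
    have h0 := hkdv x t'
    have e1 : deriv (fun t'' => u x t'') t' = pdt v (x, t') :=
      (hasDerivAt_sec_t hv x t').deriv
    rw [e1, hderiv_sec, hIE] at h0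
    have : u x t' = v (x, t') := rfl
    rw [this] at h0
    linarith
  -- the mixed partial
  have hMix : ∀ x t', pdt (W v 1) (x, t') =
      6 * (W v 1 (x, t'))^2 + 6 * v (x, t') * W v 2 (x, t') - W v 4 (x, t') := by
    intro x t'
    have hW1e : W v 1 = pdx v := rfl
    have hcomm : pdt (W v 1) (x, t') = pdx (pdt v) (x, t') := by
      rw [hW1e, ← pd_comm hv]
    rw [hcomm]
    have h1 : HasDerivAt (fun x' => pdt v (x', t')) (pdx (pdt v) (x, t')) x :=
      hasDerivAt_sec_x (contDiff_pdt hv) x t'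
    have h2 : HasDerivAt (fun x' => pdt v (x', t'))
        (6 * W v 1 (x, t') * W v 1 (x, t') + 6 * v (x, t') * W v 2 (x, t')
          - W v 4 (x, t')) x := by
      have e : (fun x' => pdt v (x', t')) =
          fun x' => 6 * v (x', t') * W v 1 (x', t') - W v 3 (x', t') :=
        funext fun x' => hK x' t'
      rw [e]
      have hv0 : HasDerivAt (fun x' => v (x', t')) (W v 1 (x, t')) x := hWd 0 x t'
      have hv1 := hWd 1 x t'
      have hv3 := hWd 3 x t'
      exact ((hv0.const_mul 6).mul hv1).sub hv3
    have := h1.unique h2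
    rw [this]; ring
  -- the pointwise time-derivative of the integrand
  set h : ℝ → ℝ := fun x =>
    12 * (W v 1 (x, t))^3 + 12 * W v 0 (x, t) * W v 1 (x, t) * W v 2 (x, t)
      - 2 * W v 1 (x, t) * W v 4 (x, t) + 36 * (W v 0 (x, t))^3 * W v 1 (x, t)
      - 6 * (W v 0 (x, t))^2 * W v 3 (x, t) with hhdef
  have key1 : ∀ x, deriv (fun t' =>
      (deriv (fun x' => u x' t') x)^2 + 2*(u x t')^3) t = h x := by
    intro x
    have e : (fun t' => (deriv (fun x' => u x' t') x)^2 + 2*(u x t')^3) =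
        fun t' => (W v 1 (x, t'))^2 + 2*(v (x, t'))^3 := by
      funext t'
      rw [hderiv_sec]
    rw [e]
    have hW1t : HasDerivAt (fun t' => W v 1 (x, t')) (pdt (W v 1) (x, t)) t :=
      hasDerivAt_sec_t (W_contDiff hv 1) x t
    have hvt : HasDerivAt (fun t' => v (x, t')) (pdt v (x, t)) t :=
      hasDerivAt_sec_t hv x t
    have hda := (hW1t.pow 2).add ((hvt.pow 3).const_mul 2)
    rw [show deriv (fun t' => W v 1 (x, t') ^ 2 + 2 * v (x, t') ^ 3) t = _ from hda.deriv, hMix, hK]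
    simp only [hhdef, hW0]
    ring
  -- the spatial antiderivative
  set g : ℝ → ℝ := fun x =>
    12 * W v 0 (x, t) * (W v 1 (x, t))^2 + (W v 2 (x, t))^2
      - 2 * W v 1 (x, t) * W v 3 (x, t) + 9 * (W v 0 (x, t))^4
      - 6 * (W v 0 (x, t))^2 * W v 2 (x, t) with hgdef
  have key2 : ∀ x, HasDerivAt g (h x) x := by
    intro x
    have h0 := hWd 0 x t
    have h1 := hWd 1 x t
    have h2 := hWd 2 x t
    have h3 := hWd 3 x t
    have hda := (((((h0.const_mul 12).mul (h1.pow 2)).add (h2.pow 2)).sub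
      ((h1.const_mul 2).mul h3)).add ((h0.pow 4).const_mul 9)).sub
      (((h0.pow 2).const_mul 6).mul h2)
    refine (show HasDerivAt g _ x from hda).congr_deriv ?_
    simp only [hhdef, Pi.pow_apply, Nat.cast_ofNat, Nat.reduceSub, Nat.reduceAdd]
    ring
  -- continuity and decay of the building blocks
  have hWc : ∀ n, Continuous (fun x => W v n (x, t)) := fun n =>
    (W_contDiff hv n).continuous.comp (continuous_id.prodMk continuous_const)
  have hWtop : ∀ n ≤ 5, Tendsto (fun x => W v n (x, t)) atTop (nhds 0) := by
    intro n hn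
    have := (hdecay t n hn).1
    simpa only [hIE] using this
  have hWbot : ∀ n ≤ 5, Tendsto (fun x => W v n (x, t)) atBot (nhds 0) := by
    intro n hn
    have := (hdecay t n hn).2
    simpa only [hIE] using this
  have hWint : ∀ n ≤ 5, Integrable (fun x => W v n (x, t)) := by
    intro n hn
    have := hint t n hn
    simpa only [hIE] using this
  -- g tends to 0 at ±∞
  have hgtop : Tendsto g atTop (nhds 0) := by
    have h0 := hWtop 0 (by norm_num)
    have h1 := hWtop 1 (by norm_num)
    have h2 := hWtop 2 (by norm_num)
    have h3 := hWtop 3 (by norm_num)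
    have : Tendsto g atTop (nhds (12 * 0 * 0^2 + 0^2 - 2*0*0 + 9*0^4 - 6*0^2*0)) := by
      exact ((((((tendsto_const_nhds.mul h0).mul (h1.pow 2)).add (h2.pow 2)).sub
        ((tendsto_const_nhds.mul h1).mul h3)).add
        ((h0.pow 4).const_mul 9)).sub (((h0.pow 2).const_mul 6).mul h2))
    simpa using this
  have hgbot : Tendsto g atBot (nhds 0) := by
    have h0 := hWbot 0 (by norm_num)
    have h1 := hWbot 1 (by norm_num)
    have h2 := hWbot 2 (by norm_num)
    have h3 := hWbot 3 (by norm_num)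
    have : Tendsto g atBot (nhds (12 * 0 * 0^2 + 0^2 - 2*0*0 + 9*0^4 - 6*0^2*0)) := by
      exact ((((((tendsto_const_nhds.mul h0).mul (h1.pow 2)).add (h2.pow 2)).sub
        ((tendsto_const_nhds.mul h1).mul h3)).add
        ((h0.pow 4).const_mul 9)).sub (((h0.pow 2).const_mul 6).mul h2))
    simpa using this
  have hgcont : Continuous g :=
    (((((continuous_const.mul (hWc 0)).mul ((hWc 1).pow 2)).add
      ((hWc 2).pow 2)).sub ((continuous_const.mul (hWc 1)).mul (hWc 3))).add
      (continuous_const.mul ((hWc 0).pow 4))).sub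
      ((continuous_const.mul ((hWc 0).pow 2)).mul (hWc 2))
  -- integrability of h
  have mk : ∀ (f : ℝ → ℝ) (n : ℕ), n ≤ 5 → Continuous f →
      Tendsto f atTop (nhds 0) → Tendsto f atBot (nhds 0) →
      Integrable (fun x => f x * W v n (x, t)) := by
    intro f n hn hc h1 h2
    obtain ⟨C, hC⟩ := bdd_of_tendsto hc h1 h2
    exact (hWint n hn).bdd_mul hc.aestronglyMeasurable (Filter.Eventually.of_forall hC)
  have hhint : Integrable h := by
    have t1 : Integrable (fun x => (12 * (W v 1 (x, t))^2) * W v 1 (x, t)) := by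
      refine mk _ 1 (by norm_num) (continuous_const.mul ((hWc 1).pow 2)) ?_ ?_
      · simpa using ((hWtop 1 (by norm_num)).pow 2).const_mul 12
      · simpa using ((hWbot 1 (by norm_num)).pow 2).const_mul 12
    have t2 : Integrable (fun x =>
        (12 * W v 0 (x, t) * W v 2 (x, t)) * W v 1 (x, t)) := by
      refine mk _ 1 (by norm_num)
        ((continuous_const.mul (hWc 0)).mul (hWc 2)) ?_ ?_
      · simpa using ((hWtop 0 (by norm_num)).const_mul 12).mul (hWtop 2 (by norm_num))
      · simpa using ((hWbot 0 (by norm_num)).const_mul 12).mul (hWbot 2 (by norm_num))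
    have t3 : Integrable (fun x => (2 * W v 1 (x, t)) * W v 4 (x, t)) := by
      refine mk _ 4 (by norm_num) (continuous_const.mul (hWc 1)) ?_ ?_
      · simpa using (hWtop 1 (by norm_num)).const_mul 2
      · simpa using (hWbot 1 (by norm_num)).const_mul 2
    have t4 : Integrable (fun x => (36 * (W v 0 (x, t))^3) * W v 1 (x, t)) := by
      refine mk _ 1 (by norm_num) (continuous_const.mul ((hWc 0).pow 3)) ?_ ?_
      · simpa using ((hWtop 0 (by norm_num)).pow 3).const_mul 36
      · simpa using ((hWbot 0 (by norm_num)).pow 3).const_mul 36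
    have t5 : Integrable (fun x => (6 * (W v 0 (x, t))^2) * W v 3 (x, t)) := by
      refine mk _ 3 (by norm_num) (continuous_const.mul ((hWc 0).pow 2)) ?_ ?_
      · simpa using ((hWtop 0 (by norm_num)).pow 2).const_mul 6
      · simpa using ((hWbot 0 (by norm_num)).pow 2).const_mul 6
    have hcomb := (((t1.add t2).sub t3).add t4).sub t5
    have e : h = fun x =>
        ((((12 * (W v 1 (x, t))^2) * W v 1 (x, t)
          + (12 * W v 0 (x, t) * W v 2 (x, t)) * W v 1 (x, t))
          - (2 * W v 1 (x, t)) * W v 4 (x, t))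
          + (36 * (W v 0 (x, t))^3) * W v 1 (x, t))
          - (6 * (W v 0 (x, t))^2) * W v 3 (x, t) := by
      funext x
      simp only [hhdef]
      ring
    rw [e]
    exact hcomb
  -- the integral of h vanishes
  have hint0 : (∫ x, h x) = 0 := by
    have i1 : ∫ x in Set.Iic (0:ℝ), h x = g 0 - 0 :=
      integral_Iic_of_hasDerivAt_of_tendsto hgcont.continuousWithinAt
        (fun x _ => key2 x) hhint.integrableOn hgbot
    have i2 : ∫ x in Set.Ioi (0:ℝ), h x = 0 - g 0 :=
      integral_Ioi_of_hasDerivAt_of_tendsto hgcont.continuousWithinAt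
        (fun x _ => key2 x) hhint.integrableOn hgtop
    have := intervalIntegral.integral_Iic_add_Ioi (b := (0:ℝ))
      hhint.integrableOn hhint.integrableOn
    rw [i1, i2] at this
    linarith [this]
  -- finish
  have hd := hdui t
  have e : (∫ x, deriv (fun t' =>
      (deriv (fun x' => u x' t') x)^2 + 2*(u x t')^3) t) = 0 := by
    rw [show (fun x : ℝ => deriv (fun t' =>
      (deriv (fun x' => u x' t') x)^2 + 2*(u x t')^3) t) = h from funext key1]
    exact hint0
  rwa [e] at hd
end

section
/- For any cubic with roots as in Boussinesq's periodic analysis: if h : ℝ → ℝ is differentiable and satisfies (h')² = (3/H³)·(h + k)·h·(l − h) with k, l, H > 0, then 0 ≤ h(x) ≤ l for all x (the wave profile stays between the trough and the crest). -/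
open Real

/-- Boussinesq's periodic wave bound: if a differentiable `h` satisfies
`(h')² = (3/H³)(h + k) h (l - h)` with `k, l, H > 0` and takes a value in
`[0, l]` somewhere, then `0 ≤ h ≤ l` everywhere: the profile stays between the
trough and the crest. -/
theorem cnoidal_profile_bounds (H k l : ℝ) (hH : 0 < H) (hk : 0 < k) (hl : 0 < l)
    (h : ℝ → ℝ) (hdiff : Differentiable ℝ h)
    (hode : ∀ x, (deriv h x)^2 = (3/H^3) * (h x + k) * h x * (l - h x))
    (hx₀ : ∃ x₀, 0 ≤ h x₀ ∧ h x₀ ≤ l) :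
    ∀ x, 0 ≤ h x ∧ h x ≤ l := by
  obtain ⟨x₀, hx₀0, hx₀l⟩ := hx₀
  have hH3 : 0 < H^3 := by positivity
  have key : ∀ x, h x ≤ -k ∨ (0 ≤ h x ∧ h x ≤ l) := by
    intro x
    have hpos : 0 < 3/H^3 := by positivity
    have hnn : 0 ≤ (h x + k) * h x * (l - h x) := by
      have h0 : 0 ≤ 3/H^3 * ((h x + k) * h x * (l - h x)) := by
        have := hode x
        nlinarith [sq_nonneg (deriv h x)]
      nlinarith [h0, hpos]
    by_contra hc
    push_neg at hc
    obtain ⟨h1, h2⟩ := hc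
    rcases lt_or_ge (h x) 0 with h3 | h3
    · have hp : 0 < (h x + k) * (l - h x) := mul_pos (by linarith) (by linarith)
      nlinarith [mul_neg_of_pos_of_neg hp h3]
    · have h4 := h2 h3
      have hp : 0 < (h x + k) * h x := mul_pos (by linarith) (by linarith)
      nlinarith [mul_neg_of_pos_of_neg hp (by linarith : l - h x < 0)]
  intro x
  rcases key x with hle | hok
  · exfalso
    have hcont : ContinuousOn h (Set.uIcc x₀ x) := hdiff.continuous.continuousOn
    have hmem : (-(k/2)) ∈ Set.uIcc (h x₀) (h x) := by
      rw [Set.mem_uIcc]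
      right
      constructor <;> linarith
    obtain ⟨c, _, hc⟩ := intermediate_value_uIcc hcont hmem
    rcases key c with h1 | h2
    · rw [hc] at h1; linarith
    · rw [hc] at h2; linarith [h2.1]
  · exact hok
end
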